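/- arXiv:2111.03304 — 3 statements merged into one kernel-verified Lean document; each statement's English description precedes it below -/
import Mathlib

section
/- Let f be a nonzero continuous function on ℝ with compact support. Then the family of translates {T_t f : t ∈ ℝ}, where (T_t f)(x) = f(x - t), is linearly independent over ℂ. -/
/-- Let `f` be a nonzero continuous function on `ℝ` with compact support. Then the family
of translates `{T_t f : t ∈ ℝ}`, where `(T_t f)(x) = f (x - t)`, is linearly independent
over `ℂ`. -/
theorem translates_linearIndependent
    (f : ℝ → ℂ) (hf : Continuous f) (hsupp : HasCompactSupport f) (hne : f ≠ 0) :
    LinearIndependent ℂ (fun t : ℝ => (fun x => f (x - t) : ℝ → ℂ)) := by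
  have hK : IsCompact (tsupport f) := hsupp
  have hKne : (tsupport f).Nonempty := by
    obtain ⟨y, hy⟩ := Function.support_nonempty_iff.mpr hne
    exact ⟨y, subset_tsupport f hy⟩
  set b := sSup (tsupport f) with hb
  have hbK : b ∈ tsupport f := hK.sSup_mem hKne
  have hle : ∀ y ∈ tsupport f, y ≤ b := fun y hy => le_csSup hK.bddAbove hy
  have hzero : ∀ x, b < x → f x = 0 := by
    intro x hx
    by_contra h
    exact absurd (hle x (subset_tsupport f (by simpa [Function.mem_support] using h)))
      (not_le.mpr hx)
  have hnear : ∀ ε : ℝ, 0 < ε → ∃ y, f y ≠ 0 ∧ b - ε < y := by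
    intro ε hε
    have hcl : b ∈ closure (Function.support f) := hbK
    rw [Metric.mem_closure_iff] at hcl
    obtain ⟨y, hy, hd⟩ := hcl ε hε
    refine ⟨y, hy, ?_⟩
    have habs := abs_lt.mp (by simpa [Real.dist_eq] using hd)
    linarith [habs.1, habs.2]
  have key : ∀ s : Finset ℝ, ∀ g : ℝ → ℂ,
      (∀ x, ∑ t ∈ s, g t * f (x - t) = 0) → ∀ t ∈ s, g t = 0 := by
    intro s
    induction s using Finset.strongInduction with
    | _ s ih =>
      intro g hgx t ht
      have hsne : s.Nonempty := ⟨t, ht⟩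
      set m := s.max' hsne with hm
      have hmem : m ∈ s := s.max'_mem hsne
      obtain ⟨ε, hε, hεt⟩ : ∃ ε : ℝ, 0 < ε ∧ ∀ u ∈ s.erase m, u ≤ m - ε := by
        by_cases h : (s.erase m).Nonempty
        · set m' := (s.erase m).max' h with hm'
          have hm'mem : m' ∈ s.erase m := (s.erase m).max'_mem h
          have hm's : m' ∈ s := Finset.mem_of_mem_erase hm'mem
          have hm'ne : m' ≠ m := Finset.ne_of_mem_erase hm'mem
          have hm'lt : m' < m := lt_of_le_of_ne (s.le_max' m' hm's) hm'ne
          refine ⟨m - m', by linarith, fun u hu => ?_⟩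
          have := (s.erase m).le_max' u hu
          linarith
        · exact ⟨1, one_pos, fun u hu => absurd ⟨u, hu⟩ h⟩
      have hgm : g m = 0 := by
        obtain ⟨y, hy, hyb⟩ := hnear ε hε
        have hx := hgx (y + m)
        rw [← Finset.add_sum_erase s _ hmem] at hx
        have h0 : ∀ u ∈ s.erase m, g u * f (y + m - u) = 0 := by
          intro u hu
          have hub := hεt u hu
          have : b < y + m - u := by linarith
          rw [hzero _ this, mul_zero]
        rw [Finset.sum_eq_zero h0, add_zero] at hx
        simp only [add_sub_cancel_right] at hx
        rcases mul_eq_zero.mp hx with h | h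
        · exact h
        · exact absurd h hy
      rcases eq_or_ne t m with rfl | htm
      · exact hgm
      · refine ih (s.erase m) (Finset.erase_ssubset hmem) g ?_ t
          (Finset.mem_erase.mpr ⟨htm, ht⟩)
        intro x
        have hx := hgx x
        rw [← Finset.add_sum_erase s _ hmem, hgm, zero_mul, zero_add] at hx
        exact hx
  rw [linearIndependent_iff']
  intro s g hg i hi
  refine key s g (fun x => ?_) i hi
  have := congrFun hg x
  simpa using this
end

section
/- Let G be a locally compact abelian group and let θ : K₂(G) → ℂ be a positive linear functional, i.e. θ(f) ≥ 0 whenever f ∈ K₂(G) satisfies f ≥ 0. Then θ is continuous in the inductive topology: for every compact set K ⊆ G there exists C_K > 0 such that |θ(f)| ≤ C_K ‖f‖_∞ for all f ∈ K₂(G) with supp(f) ⊆ K. -/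
open MeasureTheory Complex Filter Topology Pointwise

noncomputable section

section Defs

variable (G : Type*) [AddCommGroup G] [UniformSpace G] [IsUniformAddGroup G]
  [MeasurableSpace G] [BorelSpace G]

/-- Continuous compactly supported complex-valued functions on `G`. -/
def Cc : Set (G → ℂ) := {f | Continuous f ∧ HasCompactSupport f}

variable {G}

/-- Convolution of two functions with respect to a (Haar) measure `θ`. -/
def conv (θ : Measure G) (f g : G → ℂ) : G → ℂ := fun x => ∫ y, f y * g (x - y) ∂θ

/-- `f~(x) = conj (f (-x))`. -/
def ftilde (f : G → ℂ) : G → ℂ := fun x => (starRingEnd ℂ) (f (-x))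

/-- `K₂(G)`: the linear span of convolutions of compactly supported continuous functions. -/
def K2 (θ : Measure G) : Submodule ℂ (G → ℂ) :=
  Submodule.span ℂ {h | ∃ f ∈ Cc G, ∃ g ∈ Cc G, h = conv θ f g}

open scoped Classical in
/-- Application of a semi-measure (a linear functional on `K₂(G)`) to a function,
with junk value `0` outside `K₂(G)`. -/
def smApply (θ : Measure G) (ϑ : K2 θ →ₗ[ℂ] ℂ) (f : G → ℂ) : ℂ :=
  if h : f ∈ K2 θ then ϑ ⟨f, h⟩ else 0

/-- Convolution of a semi-measure with a function: `(ϑ * f)(t) = ϑ (T_t f†)`. -/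
def smConv (θ : Measure G) (ϑ : K2 θ →ₗ[ℂ] ℂ) (f : G → ℂ) : G → ℂ :=
  fun t => smApply θ ϑ (fun x => f (t - x))

/-- A semi-measure is semi-translation bounded if `ϑ * f` is bounded and
uniformly continuous for every `f ∈ K₂(G)`. -/
def SemiTB (θ : Measure G) (ϑ : K2 θ →ₗ[ℂ] ℂ) : Prop :=
  ∀ f ∈ K2 θ, UniformContinuous (smConv θ ϑ f) ∧ ∃ C : ℝ, ∀ t, ‖smConv θ ϑ f t‖ ≤ C

/-- A semi-measure is intertwining if `(ϑ * f) * g = ϑ * (f * g)`. -/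
def Intertwining (θ : Measure G) (ϑ : K2 θ →ₗ[ℂ] ℂ) : Prop :=
  ∀ f ∈ K2 θ, ∀ g ∈ K2 θ, conv θ (smConv θ ϑ f) g = smConv θ ϑ (conv θ f g)

/-- A semi-measure is positive definite if `ϑ(f * f~) ≥ 0` for all `f ∈ C_c(G)`. -/
def PosDefSM (θ : Measure G) (ϑ : K2 θ →ₗ[ℂ] ℂ) : Prop :=
  ∀ f ∈ Cc G, 0 ≤ (smApply θ ϑ (conv θ f (ftilde f))).re ∧
    (smApply θ ϑ (conv θ f (ftilde f))).im = 0

end Defs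

section Dual

variable {G : Type*} [AddCommGroup G] [TopologicalSpace G]

/-- The dual group: continuous characters of `G`, with the compact-open topology. -/
def DualGroup (G : Type*) [AddCommGroup G] [TopologicalSpace G] : Type _ :=
  {χ : C(G, ℂ) // (∀ x y, χ (x + y) = χ x * χ y) ∧ ∀ x, ‖χ x‖ = 1}

instance : TopologicalSpace (DualGroup G) := instTopologicalSpaceSubtype

instance : MeasurableSpace (DualGroup G) := borel _

/-- Product of two characters. -/
def dMul (χ ψ : DualGroup G) : DualGroup G :=
  ⟨χ.1 * ψ.1, by
    refine ⟨fun x y => ?_, fun x => ?_⟩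
    · simp only [ContinuousMap.mul_apply, χ.2.1 x y, ψ.2.1 x y]; ring
    · simp only [ContinuousMap.mul_apply, norm_mul, χ.2.2 x, ψ.2.2 x, mul_one]⟩

/-- Inverse (conjugate) of a character. -/
def dInv (χ : DualGroup G) : DualGroup G :=
  ⟨⟨fun x => (starRingEnd ℂ) (χ.1 x), by
      exact continuous_star.comp χ.1.continuous⟩, by
    refine ⟨fun x y => ?_, fun x => ?_⟩
    · show (starRingEnd ℂ) (χ.1 (x + y)) = _
      rw [χ.2.1 x y, map_mul]; rfl
    · show ‖(starRingEnd ℂ) (χ.1 x)‖ = 1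
      rw [starRingEnd_apply, norm_star]; exact χ.2.2 x⟩

variable [MeasurableSpace G]

/-- Fourier transform of a function on `G`, as a function on the dual group. -/
def ftF (θ : Measure G) (f : G → ℂ) : DualGroup G → ℂ :=
  fun χ => ∫ t, (starRingEnd ℂ) (χ.1 t) * f t ∂θ

/-- Inverse Fourier transform of a function on `G`, as a function on the dual group. -/
def iftF (θ : Measure G) (f : G → ℂ) : DualGroup G → ℂ :=
  fun χ => ∫ t, (χ.1 t) * f t ∂θ

/-- Continuous compactly supported functions on the dual group. -/
def CcHat : Set (DualGroup G → ℂ) := {f | Continuous f ∧ HasCompactSupport f}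

/-- Convolution on the dual group. -/
def convHat (θh : Measure (DualGroup G)) (F H : DualGroup G → ℂ) : DualGroup G → ℂ :=
  fun χ => ∫ ψ, F ψ * H (dMul χ (dInv ψ)) ∂θh

/-- `K₂(Ĝ)`. -/
def K2Hat (θh : Measure (DualGroup G)) : Submodule ℂ (DualGroup G → ℂ) :=
  Submodule.span ℂ {h | ∃ F ∈ CcHat (G := G), ∃ H ∈ CcHat (G := G), h = convHat θh F H}

/-- Inverse Fourier transform of a function on the dual group, as a function on `G`. -/
def iftHat (θh : Measure (DualGroup G)) (f : DualGroup G → ℂ) : G → ℂ :=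
  fun t => ∫ χ, (χ.1 t) * f χ ∂θh

end Dual

section CMeas

/-- A complex (Radon) measure presented in polar form: a positive total variation
measure together with a unimodular density. -/
structure CMeasure (X : Type*) [MeasurableSpace X] where
  tv : Measure X
  density : X → ℂ
  norm_density : ∀ x, ‖density x‖ = 1

/-- Integral of a function against a complex measure. -/
def CMeasure.integral {X : Type*} [MeasurableSpace X] (ν : CMeasure X) (f : X → ℂ) : ℂ :=
  ∫ x, f x * ν.density x ∂ν.tv

end CMeas

section FT

variable {G : Type*} [AddCommGroup G] [UniformSpace G] [IsUniformAddGroup G]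
  [MeasurableSpace G] [BorelSpace G]

/-- `ν` is the Fourier transform of the semi-measure `ϑ`:
`|f̌|² ∈ L¹(ν)` and `ϑ(f * f~) = ν(|f̌|²)` for all `f ∈ C_c(G)`. -/
def IsSMFourierTransform (θ : Measure G) (ϑ : K2 θ →ₗ[ℂ] ℂ)
    (ν : CMeasure (DualGroup G)) : Prop :=
  ∀ f ∈ Cc G, Integrable (fun χ => ‖iftF θ f χ‖ ^ 2) ν.tv ∧
    smApply θ ϑ (conv θ f (ftilde f)) = ν.integral (fun χ => ((‖iftF θ f χ‖ ^ 2 : ℝ) : ℂ))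

end FT

section Aux

variable {G : Type*} [AddCommGroup G] [UniformSpace G] [IsUniformAddGroup G]
  [MeasurableSpace G] [BorelSpace G]

/-- `K₂(G)` is stable under pointwise complex conjugation. -/
lemma K2_conj_mem (θ : Measure G) {f : G → ℂ} (hf : f ∈ K2 θ) :
    (fun x => (starRingEnd ℂ) (f x)) ∈ K2 θ := by
  induction hf using Submodule.span_induction with
  | mem h hh =>
    obtain ⟨a, ha, b, hb, rfl⟩ := hh
    refine Submodule.subset_span ⟨fun x => (starRingEnd ℂ) (a x),
      ⟨continuous_star.comp ha.1, ha.2.comp_left (map_zero _)⟩,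
      fun x => (starRingEnd ℂ) (b x),
      ⟨continuous_star.comp hb.1, hb.2.comp_left (map_zero _)⟩, ?_⟩
    funext x
    simp only [conv, ← integral_conj, map_mul]
  | zero =>
    have : (fun t => (starRingEnd ℂ) ((0 : G → ℂ) t)) = (0 : G → ℂ) := by funext t; simp
    rw [this]; exact (K2 θ).zero_mem
  | add x y hx hy ihx ihy =>
    have : (fun t => (starRingEnd ℂ) ((x + y) t))
        = (fun t => (starRingEnd ℂ) (x t)) + fun t => (starRingEnd ℂ) (y t) := by
      funext t; simp
    rw [this]; exact (K2 θ).add_mem ihx ihy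
  | smul c x hx ih =>
    have : (fun t => (starRingEnd ℂ) ((c • x) t))
        = (starRingEnd ℂ) c • fun t => (starRingEnd ℂ) (x t) := by
      funext t; simp [mul_comm]
    rw [this]; exact (K2 θ).smul_mem _ ih

/-- Every element of `K₂(G)` is (globally) bounded. -/
lemma K2_bounded (θ : Measure G) [θ.IsAddHaarMeasure] {f : G → ℂ} (hf : f ∈ K2 θ) :
    ∃ C : ℝ, ∀ x, ‖f x‖ ≤ C := by
  induction hf using Submodule.span_induction with
  | mem h hh =>
    obtain ⟨a, ha, b, hb, rfl⟩ := hh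
    obtain ⟨Cb, hCb⟩ := hb.1.bounded_above_of_compact_support hb.2
    have hCb' : 0 ≤ max Cb 0 := le_max_right _ _
    have hai : Integrable a θ := ha.1.integrable_of_hasCompactSupport ha.2
    refine ⟨(∫ y, ‖a y‖ ∂θ) * max Cb 0, fun x => ?_⟩
    calc ‖conv θ a b x‖ ≤ ∫ y, ‖a y * b (x - y)‖ ∂θ := norm_integral_le_integral_norm _
      _ ≤ ∫ y, ‖a y‖ * max Cb 0 ∂θ := by
          refine integral_mono_of_nonneg (Filter.Eventually.of_forall fun y => norm_nonneg _)
            (hai.norm.mul_const _) (Filter.Eventually.of_forall fun y => ?_)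
          dsimp only
          rw [norm_mul]
          exact mul_le_mul_of_nonneg_left ((hCb _).trans (le_max_left _ _)) (norm_nonneg _)
      _ = (∫ y, ‖a y‖ ∂θ) * max Cb 0 := by rw [integral_mul_const]
  | zero => exact ⟨0, fun x => by simp⟩
  | add x y hx hy ihx ihy =>
    obtain ⟨Cx, hCx⟩ := ihx; obtain ⟨Cy, hCy⟩ := ihy
    exact ⟨Cx + Cy, fun t => (norm_add_le _ _).trans (add_le_add (hCx t) (hCy t))⟩
  | smul c x hx ih =>
    obtain ⟨Cx, hCx⟩ := ih
    exact ⟨‖c‖ * Cx, fun t => by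
      simpa [norm_smul] using mul_le_mul_of_nonneg_left (hCx t) (norm_nonneg c)⟩

/-- Existence of a nonnegative real element of `K₂(G)` bounded below by a positive constant
on a given compact set. -/
lemma K2_exists_bump (θ : Measure G) [θ.IsAddHaarMeasure] [LocallyCompactSpace G]
    {K : Set G} (hK : IsCompact K) :
    ∃ h ∈ K2 θ, (∀ x : G, 0 ≤ (h x).re ∧ (h x).im = 0) ∧
      ∃ c : ℝ, 0 < c ∧ ∀ x ∈ K, c ≤ (h x).re := by
  obtain ⟨V, hVc, hV0⟩ := exists_compact_mem_nhds (0 : G)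
  -- the bump `v` around `0`, supported in `interior V`
  obtain ⟨v, hv1, hv0, hvsupp, hvmem⟩ :=
    exists_continuous_one_zero_of_isCompact (isCompact_singleton (x := (0 : G)))
      (isOpen_interior (s := V)).isClosed_compl
      (by simpa [Set.disjoint_singleton_left] using mem_interior_iff_mem_nhds.2 hV0)
  have hvV : ∀ x : G, v x ≠ 0 → x ∈ V := by
    intro x hx
    by_contra hxV
    exact hx (hv0 (fun hmem : x ∈ interior V => hxV (interior_subset hmem)))
  -- the compact set `K - V` and a plateau function `u` equal to `1` on it
  set K' : Set G := (fun p : G × G => p.1 - p.2) '' (K ×ˢ V) with hK'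
  have hK'c : IsCompact K' := (hK.prod hVc).image (continuous_fst.sub continuous_snd)
  obtain ⟨u, hu1, -, husupp, humem⟩ :=
    exists_continuous_one_zero_of_isCompact hK'c isClosed_empty (Set.disjoint_empty _)
  -- the candidate function `h = u * v` (convolution)
  set uC : G → ℂ := fun x => ((u x : ℝ) : ℂ) with huC
  set vC : G → ℂ := fun x => ((v x : ℝ) : ℂ) with hvC
  have huCc : uC ∈ Cc G :=
    ⟨Complex.continuous_ofReal.comp u.continuous,
      husupp.comp_left (g := fun r : ℝ => (r : ℂ)) (by simp)⟩
  have hvCc : vC ∈ Cc G :=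
    ⟨Complex.continuous_ofReal.comp v.continuous,
      hvsupp.comp_left (g := fun r : ℝ => (r : ℂ)) (by simp)⟩
  refine ⟨conv θ uC vC, Submodule.subset_span ⟨uC, huCc, vC, hvCc, rfl⟩, ?_, ?_⟩
  · -- pointwise real and nonnegative
    intro x
    have : conv θ uC vC x = ((∫ y, u y * v (x - y) ∂θ : ℝ) : ℂ) := by
      rw [conv]
      have hpt0 : (fun y => uC y * vC (x - y)) = fun y => ((u y * v (x - y) : ℝ) : ℂ) := by
        funext y; push_cast; rfl
      rw [hpt0]
      exact integral_ofReal
    rw [this]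
    refine ⟨?_, by simp⟩
    simp only [Complex.ofReal_re]
    exact integral_nonneg fun y =>
      mul_nonneg (humem y).1 (hvmem _).1
  · -- bounded below on `K`
    refine ⟨∫ y, v (-y) ∂θ, ?_, ?_⟩
    · -- positivity of the integral of `v ∘ neg`
      have hcont : Continuous fun y : G => v (-y) := v.continuous.comp continuous_neg
      have hsupp : HasCompactSupport fun y : G => v (-y) :=
        hvsupp.comp_homeomorph (Homeomorph.neg G)
      rw [integral_pos_iff_support_of_nonneg (fun y => (hvmem _).1)
        (hcont.integrable_of_hasCompactSupport hsupp)]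
      have hopen : IsOpen (Function.support fun y : G => v (-y)) :=
        hcont.isOpen_support
      refine hopen.measure_pos θ ⟨0, ?_⟩
      simp only [Function.mem_support, neg_zero]
      simp [hv1 rfl]
    · intro x hx
      have hpt : (fun y => uC y * vC (x - y)) = fun y => ((v (x - y) : ℝ) : ℂ) := by
        funext y
        rcases eq_or_ne (v (x - y)) 0 with hz | hz
        · simp [huC, hvC, hz]
        · have hyK' : y ∈ K' := by
            refine ⟨(x, x - y), Set.mk_mem_prod hx (hvV _ hz), by simp⟩
          simp [huC, hvC, hu1 hyK']
      have : conv θ uC vC x = ((∫ y, v (x - y) ∂θ : ℝ) : ℂ) := by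
        rw [conv, hpt]
        exact integral_ofReal
      rw [this, Complex.ofReal_re]
      have : (∫ y, v (x - y) ∂θ) = ∫ y, v (-y) ∂θ := by
        have := integral_sub_right_eq_self (μ := θ) (fun y : G => v (-y)) x
        simpa [neg_sub] using this
      rw [this]

end Aux

set_option maxHeartbeats 1000000 in
/-- Let `G` be a locally compact abelian group and `ϑ : K₂(G) → ℂ` a
positive linear functional (i.e. `ϑ f ≥ 0` whenever `f ∈ K₂(G)` is pointwise nonnegative).
Then `ϑ` is continuous in the inductive topology: for every compact `K ⊆ G` there is a
constant `C_K > 0` with `|ϑ f| ≤ C_K ‖f‖_∞` for all `f ∈ K₂(G)` supported in `K`. -/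
theorem positive_semimeasure_continuous
    {G : Type*} [AddCommGroup G] [UniformSpace G] [IsUniformAddGroup G]
    [LocallyCompactSpace G] [MeasurableSpace G] [BorelSpace G]
    (θ : Measure G) [θ.IsAddHaarMeasure]
    (ϑ : K2 θ →ₗ[ℂ] ℂ)
    (hpos : ∀ f : K2 θ, (∀ x, 0 ≤ ((f : G → ℂ) x).re ∧ ((f : G → ℂ) x).im = 0) →
      0 ≤ (ϑ f).re ∧ (ϑ f).im = 0) :
    ∀ K : Set G, IsCompact K → ∃ C : ℝ, 0 < C ∧ ∀ f : K2 θ,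
      tsupport (f : G → ℂ) ⊆ K → ‖ϑ f‖ ≤ C * ⨆ x, ‖(f : G → ℂ) x‖ := by
  intro K hK
  obtain ⟨h, hmem, hreal, c, hc, hcK⟩ := K2_exists_bump θ hK
  -- normalize so that `h ≥ 1` on `K`
  set H : K2 θ := ⟨((c⁻¹ : ℝ) : ℂ) • h, (K2 θ).smul_mem _ hmem⟩ with hH
  have hHreal : ∀ x : G, 0 ≤ ((H : G → ℂ) x).re ∧ ((H : G → ℂ) x).im = 0 := by
    intro x
    have h1 := (hreal x).1; have h2 := (hreal x).2
    constructor
    · simp only [hH, Pi.smul_apply, smul_eq_mul, Complex.mul_re, Complex.ofReal_re,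
        Complex.ofReal_im, zero_mul, sub_zero]
      positivity
    · simp [hH, Complex.mul_im, h2]
  have hHK : ∀ x ∈ K, (1 : ℝ) ≤ ((H : G → ℂ) x).re := by
    intro x hx
    have := hcK x hx
    simp only [hH, Pi.smul_apply, smul_eq_mul, Complex.mul_re, Complex.ofReal_re,
      Complex.ofReal_im, zero_mul, sub_zero]
    calc (1 : ℝ) = c⁻¹ * c := by field_simp
      _ ≤ c⁻¹ * (h x).re := mul_le_mul_of_nonneg_left this (by positivity)
  obtain ⟨hA0, hAim⟩ := hpos H hHreal
  set A : ℝ := (ϑ H).re with hAdef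
  refine ⟨2 * A + 1, by positivity, ?_⟩
  intro f hsupp
  obtain ⟨Cf, hCf⟩ := K2_bounded θ f.2
  set M : ℝ := ⨆ x, ‖(f : G → ℂ) x‖ with hM
  have hbdd : BddAbove (Set.range fun x => ‖(f : G → ℂ) x‖) := by
    refine ⟨Cf, ?_⟩; rintro - ⟨x, rfl⟩; exact hCf x
  have hMx : ∀ x, ‖(f : G → ℂ) x‖ ≤ M := fun x => le_ciSup hbdd x
  have hM0 : 0 ≤ M := le_trans (norm_nonneg _) (hMx 0)
  have hf0 : ∀ x, x ∉ K → (f : G → ℂ) x = 0 := fun x hx =>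
    image_eq_zero_of_notMem_tsupport (fun hxm => hx (hsupp hxm))
  -- key estimate for real elements of `K₂` bounded by `M` on `K` and vanishing off `K`
  have key : ∀ R : K2 θ, (∀ x, ((R : G → ℂ) x).im = 0) →
      (∀ x ∈ K, |((R : G → ℂ) x).re| ≤ M) → (∀ x, x ∉ K → (R : G → ℂ) x = 0) →
      (ϑ R).im = 0 ∧ |(ϑ R).re| ≤ M * A := by
    intro R hRim hRK hR0
    have hP : ∀ ε : ℝ, ε = 1 ∨ ε = -1 →
        0 ≤ (ϑ (((M : ℝ) : ℂ) • H + ((ε : ℝ) : ℂ) • R)).re ∧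
        (ϑ (((M : ℝ) : ℂ) • H + ((ε : ℝ) : ℂ) • R)).im = 0 := by
      intro ε hε
      have hε1 : |ε| = 1 := by rcases hε with h | h <;> simp [h]
      refine hpos _ ?_
      intro x
      have hcoe : ((((M : ℝ) : ℂ) • H + ((ε : ℝ) : ℂ) • R : K2 θ) : G → ℂ) x
          = ((M : ℝ) : ℂ) * (H : G → ℂ) x + ((ε : ℝ) : ℂ) * (R : G → ℂ) x := by
        simp
      rw [hcoe]
      constructor
      · simp only [Complex.add_re, Complex.mul_re, Complex.ofReal_re, Complex.ofReal_im,
          zero_mul, sub_zero]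
        by_cases hx : x ∈ K
        · have h1 := hHK x hx
          have h2 := hRK x hx
          have h3 : ε * ((R : G → ℂ) x).re ≥ -(M * 1) := by
            have := neg_abs_le (ε * ((R : G → ℂ) x).re)
            rw [abs_mul, hε1, one_mul] at this
            nlinarith [abs_le.1 h2 |>.1, abs_le.1 h2 |>.2, neg_abs_le ((R : G → ℂ) x).re,
              le_abs_self ((R : G → ℂ) x).re]
          nlinarith
        · rw [hR0 x hx]
          simp only [Complex.zero_re, mul_zero, add_zero]
          exact mul_nonneg hM0 (hHreal x).1
      · simp [Complex.add_im, Complex.mul_im, (hHreal x).2, (hRim x), (hreal x).2]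
    have e1 := hP 1 (Or.inl rfl)
    have e2 := hP (-1) (Or.inr rfl)
    have lin : ∀ ε : ℝ, ϑ (((M : ℝ) : ℂ) • H + ((ε : ℝ) : ℂ) • R)
        = ((M : ℝ) : ℂ) * ϑ H + ((ε : ℝ) : ℂ) * ϑ R := by
      intro ε
      rw [map_add, LinearMap.map_smul, LinearMap.map_smul, smul_eq_mul, smul_eq_mul]
    have hre1 : 0 ≤ M * (ϑ H).re + (ϑ R).re := by
      have h1 := e1.1; rw [lin 1] at h1
      simpa [Complex.add_re, Complex.mul_re] using h1
    have hre2 : 0 ≤ M * (ϑ H).re - (ϑ R).re := by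
      have h2 := e2.1; rw [lin (-1)] at h2
      simpa [Complex.add_re, Complex.mul_re, sub_eq_add_neg] using h2
    have him1 : (ϑ R).im = 0 := by
      have h1 := e1.2; rw [lin 1] at h1
      simpa [Complex.add_im, Complex.mul_im, hAim] using h1
    refine ⟨him1, ?_⟩
    rw [hAdef]
    exact abs_le.2 ⟨by linarith, by linarith⟩
  -- real part of `f` as an element of `K₂`
  have hfrmem : (fun x => ((((f : G → ℂ) x).re : ℝ) : ℂ)) ∈ K2 θ := by
    have heq : (fun x => ((((f : G → ℂ) x).re : ℝ) : ℂ))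
        = (2⁻¹ : ℂ) • ((f : G → ℂ) + fun x => (starRingEnd ℂ) ((f : G → ℂ) x)) := by
      funext x
      simp only [Pi.smul_apply, Pi.add_apply, smul_eq_mul]
      rw [Complex.add_conj]
      push_cast
      ring
    rw [heq]
    exact (K2 θ).smul_mem _ ((K2 θ).add_mem f.2 (K2_conj_mem θ f.2))
  have hfimem : (fun x => ((((f : G → ℂ) x).im : ℝ) : ℂ)) ∈ K2 θ := by
    have heq : (fun x => ((((f : G → ℂ) x).im : ℝ) : ℂ))
        = (-(2⁻¹ : ℂ) * Complex.I) • ((f : G → ℂ) - fun x => (starRingEnd ℂ) ((f : G → ℂ) x)) := by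
      funext x
      simp only [Pi.smul_apply, Pi.sub_apply, smul_eq_mul]
      apply Complex.ext <;>
        simp [Complex.mul_re, Complex.mul_im, Complex.sub_re, Complex.sub_im] <;> ring
    rw [heq]
    exact (K2 θ).smul_mem _ ((K2 θ).sub_mem f.2 (K2_conj_mem θ f.2))
  set Fr : K2 θ := ⟨_, hfrmem⟩ with hFr
  set Fi : K2 θ := ⟨_, hfimem⟩ with hFi
  have hFrkey := key Fr (fun x => by simp [hFr])
    (fun x hx => by
      simpa [hFr] using (Complex.abs_re_le_norm ((f : G → ℂ) x)).trans (hMx x))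
    (fun x hx => by simp [hFr, hf0 x hx])
  have hFikey := key Fi (fun x => by simp [hFi])
    (fun x hx => by
      simpa [hFi] using (Complex.abs_im_le_norm ((f : G → ℂ) x)).trans (hMx x))
    (fun x hx => by simp [hFi, hf0 x hx])
  have hsplit : f = Fr + Complex.I • Fi := by
    apply Subtype.ext
    funext x
    simp only [Submodule.coe_add, SetLike.val_smul, Pi.add_apply, Pi.smul_apply,
      smul_eq_mul, hFr, hFi]
    rw [mul_comm, Complex.re_add_im]
  have hnormFr : ‖ϑ Fr‖ ≤ M * A := by
    have him := hFrkey.1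
    have : ϑ Fr = (((ϑ Fr).re : ℝ) : ℂ) := Complex.ext rfl (by simp [him])
    rw [this, Complex.norm_real]
    exact hFrkey.2
  have hnormFi : ‖ϑ Fi‖ ≤ M * A := by
    have him := hFikey.1
    have : ϑ Fi = (((ϑ Fi).re : ℝ) : ℂ) := Complex.ext rfl (by simp [him])
    rw [this, Complex.norm_real]
    exact hFikey.2
  calc ‖ϑ f‖ = ‖ϑ Fr + Complex.I * ϑ Fi‖ := by
        rw [hsplit, map_add, LinearMap.map_smul, smul_eq_mul]
    _ ≤ ‖ϑ Fr‖ + ‖Complex.I * ϑ Fi‖ := norm_add_le _ _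
    _ = ‖ϑ Fr‖ + ‖ϑ Fi‖ := by rw [norm_mul, Complex.norm_I, one_mul]
    _ ≤ M * A + M * A := add_le_add hnormFr hnormFi
    _ ≤ (2 * A + 1) * M := by nlinarith
end
end

section
/- Let ϑ be a semi-measure on G such that for every compact set K ⊆ G there is C_K > 0 with |ϑ(T_t f)| ≤ C_K ‖f‖_∞ for all f ∈ K₂(G) with supp(f) ⊆ K and all t ∈ G. Then ϑ extends to a translation bounded measure on G. -/
set_option maxHeartbeats 4000000


open MeasureTheory Complex Filter Topology Pointwise Uniformity

noncomputable section

section CcSub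

variable (G : Type*) [AddCommGroup G] [UniformSpace G] [IsUniformAddGroup G]
  [MeasurableSpace G] [BorelSpace G]

/-- `C_c(G)` as a `ℂ`-subspace of all functions. -/
def CcSub : Submodule ℂ (G → ℂ) where
  carrier := Cc G
  add_mem' := fun hf hg => ⟨hf.1.add hg.1, hf.2.add hg.2⟩
  zero_mem' := ⟨continuous_const, by
    have : tsupport (0 : G → ℂ) = ∅ := by simp [tsupport]
    simp [HasCompactSupport, this]⟩
  smul_mem' := fun c f hf => ⟨hf.1.const_smul c, by
    exact HasCompactSupport.mono' hf.2 (by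
      intro x hx
      have : f x ≠ 0 := by
        intro h0
        apply hx
        show c • f x = 0
        simp [h0]
      exact subset_tsupport f this)⟩

variable {G}

open scoped Classical in
/-- Application of a measure (a linear functional on `C_c(G)`) to a function, with junk
value `0` outside `C_c(G)`. -/
def ccApply (L : CcSub G →ₗ[ℂ] ℂ) (f : G → ℂ) : ℂ :=
  if h : f ∈ CcSub G then L ⟨f, h⟩ else 0

end CcSub

set_option linter.unusedSectionVars false

section Helpers


open Function Set
open scoped Convolution

variable {G : Type*} [AddCommGroup G] [UniformSpace G] [IsUniformAddGroup G]
  [LocallyCompactSpace G] [MeasurableSpace G] [BorelSpace G]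

theorem smApply_of_mem (θ : Measure G) (ϑ : K2 θ →ₗ[ℂ] ℂ) {f : G → ℂ} (h : f ∈ K2 θ) :
    smApply θ ϑ f = ϑ ⟨f, h⟩ := by
  simp only [smApply]; rw [dif_pos h]

theorem smApply_add (θ : Measure G) (ϑ : K2 θ →ₗ[ℂ] ℂ) {f g : G → ℂ}
    (hf : f ∈ K2 θ) (hg : g ∈ K2 θ) :
    smApply θ ϑ (f + g) = smApply θ ϑ f + smApply θ ϑ g := by
  rw [smApply_of_mem θ ϑ (add_mem hf hg), smApply_of_mem θ ϑ hf, smApply_of_mem θ ϑ hg]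
  have : (⟨f + g, add_mem hf hg⟩ : K2 θ) = ⟨f, hf⟩ + ⟨g, hg⟩ := rfl
  rw [this, map_add]

theorem smApply_sub (θ : Measure G) (ϑ : K2 θ →ₗ[ℂ] ℂ) {f g : G → ℂ}
    (hf : f ∈ K2 θ) (hg : g ∈ K2 θ) :
    smApply θ ϑ (f - g) = smApply θ ϑ f - smApply θ ϑ g := by
  rw [smApply_of_mem θ ϑ (sub_mem hf hg), smApply_of_mem θ ϑ hf, smApply_of_mem θ ϑ hg]
  have : (⟨f - g, sub_mem hf hg⟩ : K2 θ) = ⟨f, hf⟩ - ⟨g, hg⟩ := rfl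
  rw [this, map_sub]

theorem smApply_smul (θ : Measure G) (ϑ : K2 θ →ₗ[ℂ] ℂ) {f : G → ℂ} (c : ℂ)
    (hf : f ∈ K2 θ) : smApply θ ϑ (c • f) = c • smApply θ ϑ f := by
  rw [smApply_of_mem θ ϑ (Submodule.smul_mem _ c hf), smApply_of_mem θ ϑ hf]
  have : (⟨c • f, Submodule.smul_mem _ c hf⟩ : K2 θ) = c • ⟨f, hf⟩ := rfl
  rw [this, LinearMap.map_smul]

theorem conv_mem_Cc (θ : Measure G) [θ.IsAddHaarMeasure] {f g : G → ℂ}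
    (hf : f ∈ Cc G) (hg : g ∈ Cc G) : conv θ f g ∈ Cc G := by
  constructor
  · show Continuous (f ⋆[ContinuousLinearMap.mul ℂ ℂ, θ] g)
    exact HasCompactSupport.continuous_convolution_right (ContinuousLinearMap.mul ℂ ℂ)
      hg.2 hf.1.locallyIntegrable hg.1
  · have h1 : support (conv θ f g) ⊆ tsupport f + tsupport g :=
      (support_convolution_subset (ContinuousLinearMap.mul ℂ ℂ)
        (f := f) (g := g) (μ := θ)).trans
        (Set.add_subset_add subset_closure subset_closure)
    exact IsCompact.closure_of_subset (hf.2.isCompact.add hg.2.isCompact) h1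

theorem bump_exists (θ : Measure G) [θ.IsAddHaarMeasure] {W : Set G} (hW : W ∈ 𝓝 (0:G)) :
    ∃ φ : G → ℝ, Continuous φ ∧ HasCompactSupport φ ∧
    (∀ x, 0 ≤ φ x) ∧ support φ ⊆ W ∧ ∫ x, φ x ∂θ = 1 := by
  obtain ⟨ψ, hψ1, hψ0, hψc, hψmem⟩ := exists_continuous_one_zero_of_isCompact
    (isCompact_singleton (x := (0:G))) (isClosed_compl_iff.2 isOpen_interior)
    (disjoint_compl_right_iff_subset.2 (by simpa using mem_interior_iff_mem_nhds.2 hW))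
  have hψcont : Continuous ψ := ψ.continuous
  have hsupp : support (fun x => ψ x) ⊆ W := by
    intro x hx
    by_contra hxW
    exact hx (hψ0 (fun hxi => hxW (interior_subset hxi)))
  have hnn : ∀ x, 0 ≤ ψ x := fun x => (hψmem x).1
  have hint : Integrable (fun x => ψ x) θ := hψcont.integrable_of_hasCompactSupport hψc
  have hpos : 0 < ∫ x, ψ x ∂θ := by
    rw [integral_pos_iff_support_of_nonneg hnn hint]
    refine IsOpen.measure_pos θ hψcont.isOpen_support ⟨0, ?_⟩
    simp [Function.mem_support, hψ1 (Set.mem_singleton 0)]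
  exact ⟨fun x => (∫ x, ψ x ∂θ)⁻¹ * ψ x, by fun_prop,
    hψc.mul_left, fun x => mul_nonneg (by positivity) (hnn x),
    (support_mul_subset_right _ _).trans hsupp, by
      rw [integral_const_mul, inv_mul_cancel₀ hpos.ne']⟩

theorem Cc.bddAbove_norm {f : G → ℂ} (hf : f ∈ Cc G) :
    BddAbove (Set.range fun x => ‖f x‖) :=
  ((hf.2.norm).isCompact_range hf.1.norm).bddAbove

theorem Cc.norm_le_iSup {f : G → ℂ} (hf : f ∈ Cc G) (x : G) :
    ‖f x‖ ≤ ⨆ y, ‖f y‖ := le_ciSup (Cc.bddAbove_norm hf) x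

end Helpers

/-- Let `ϑ` be a semi-measure on `G` such that for every compact `K ⊆ G`
there is `C_K > 0` with `|ϑ (T_t f)| ≤ C_K ‖f‖_∞` for all `f ∈ K₂(G)` supported in `K` and
all `t ∈ G`. Then `ϑ` extends to a translation bounded measure on `G` (a linear functional
on `C_c(G)` which is continuous in the inductive topology, with translation-uniform
bounds). -/
theorem semimeasure_extends_to_translation_bounded_measure
    {G : Type*} [AddCommGroup G] [UniformSpace G] [IsUniformAddGroup G]
    [LocallyCompactSpace G] [MeasurableSpace G] [BorelSpace G]
    (θ : Measure G) [θ.IsAddHaarMeasure]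
    (ϑ : K2 θ →ₗ[ℂ] ℂ)
    (hbd : ∀ K : Set G, IsCompact K → ∃ C : ℝ, 0 < C ∧ ∀ f ∈ K2 θ,
      tsupport f ⊆ K → ∀ t : G, ‖smApply θ ϑ (fun x => f (x - t))‖ ≤ C * ⨆ x, ‖f x‖) :
    ∃ L : CcSub G →ₗ[ℂ] ℂ,
      -- `L` is a (Radon) measure: continuous in the inductive topology
      (∀ K : Set G, IsCompact K → ∃ C : ℝ, 0 < C ∧ ∀ f ∈ CcSub G,
        tsupport f ⊆ K → ‖ccApply L f‖ ≤ C * ⨆ x, ‖f x‖) ∧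
      -- `L` is translation bounded
      (∀ K : Set G, IsCompact K → ∃ C : ℝ, 0 < C ∧ ∀ f ∈ CcSub G,
        tsupport f ⊆ K → ∀ t : G, ‖ccApply L (fun x => f (x - t))‖ ≤ C * ⨆ x, ‖f x‖) ∧
      -- `L` extends `ϑ`
      (∀ f ∈ K2 θ, ccApply L f = smApply θ ϑ f) := by
  classical
  have _inst : Nonempty G := ⟨0⟩
  obtain ⟨V, hVc, hV0⟩ := exists_compact_mem_nhds (0 : G)
  have h0V : (0:G) ∈ V := mem_of_mem_nhds hV0
  set ι := {U : Set G // U ∈ 𝓝 (0:G)} with hι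
  -- choose bumps
  have hbump : ∀ U : ι, ∃ φ : G → ℝ, Continuous φ ∧ HasCompactSupport φ ∧
      (∀ x, 0 ≤ φ x) ∧ Function.support φ ⊆ U.1 ∩ V ∧ ∫ x, φ x ∂θ = 1 :=
    fun U => bump_exists θ (Filter.inter_mem U.2 hV0)
  choose φ hφc hφs hφ0 hφsupp hφint using hbump
  set φc : ι → G → ℂ := fun U x => ((φ U x : ℝ) : ℂ) with hφcdef
  have hφcc : ∀ U, Continuous (φc U) := fun U => continuous_ofReal.comp (hφc U)
  have hφccs : ∀ U, HasCompactSupport (φc U) := fun U => HasCompactSupport.comp_left (g := Complex.ofReal) (hφs U) Complex.ofReal_zero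
  have hφ896 : ∀ U, Function.support (φc U) = Function.support (φ U) := by
    intro U; ext x; simp [φc, Complex.ofReal_eq_zero]
  have hφcV : ∀ U : ι, Function.support (φc U) ⊆ V := fun U => by
    rw [hφ896]; exact (hφsupp U).trans Set.inter_subset_right
  have hφcU : ∀ U : ι, Function.support (φc U) ⊆ U.1 := fun U => by
    rw [hφ896]; exact (hφsupp U).trans Set.inter_subset_left
  have hφcint : ∀ U : ι, ∫ y, φc U y ∂θ = (1:ℂ) := fun U => by
    have h := integral_ofReal (𝕜 := ℂ) (f := fun y => φ U y) (μ := θ)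
    rw [hφint U] at h
    exact h.trans (by norm_num)
  have hφCc : ∀ U : ι, φc U ∈ Cc G := fun U => ⟨hφcc U, hφccs U⟩
  -- kernels are integrable
  have hker : ∀ (U : ι) (f : G → ℂ), Continuous f → ∀ x : G,
      Integrable (fun y => φc U y * f (x - y)) θ := by
    intro U f hf x
    apply Continuous.integrable_of_hasCompactSupport
    · exact (hφcc U).mul (hf.comp (continuous_const.sub continuous_id))
    · exact (hφccs U).mul_right
  -- conv with bump is in Cc and K2
  have hconvCc : ∀ (U : ι) (f : G → ℂ), f ∈ Cc G → conv θ (φc U) f ∈ Cc G :=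
    fun U f hf => conv_mem_Cc θ (hφCc U) hf
  have hconvK2 : ∀ (U : ι) (f : G → ℂ), f ∈ Cc G → conv θ (φc U) f ∈ K2 θ :=
    fun U f hf => Submodule.subset_span ⟨φc U, hφCc U, f, hf, rfl⟩
  have hK2Cc : ∀ f ∈ K2 θ, f ∈ Cc G := by
    intro f hf
    have : K2 θ ≤ CcSub G := by
      rw [K2, Submodule.span_le]
      rintro h ⟨f, hf, g, hg, rfl⟩
      exact conv_mem_Cc θ hf hg
    exact this hf
  -- sup-norm bound for conv with bump
  have hconv_le : ∀ (U : ι) (f : G → ℂ), f ∈ Cc G → ∀ x : G,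
      ‖conv θ (φc U) f x‖ ≤ ⨆ y, ‖f y‖ := by
    intro U f hf x
    have h1 : ‖conv θ (φc U) f x‖ ≤ ∫ y, ‖φc U y * f (x - y)‖ ∂θ :=
      norm_integral_le_integral_norm _
    refine h1.trans ?_
    have h2 : ∫ y, ‖φc U y * f (x - y)‖ ∂θ ≤ ∫ y, φ U y * (⨆ z, ‖f z‖) ∂θ := by
      refine integral_mono (hker U f hf.1 x).norm ((hφc U).integrable_of_hasCompactSupport
        (hφs U) |>.mul_const _) (fun y => ?_)
      have : ‖φc U y * f (x - y)‖ = φ U y * ‖f (x - y)‖ := by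
        rw [norm_mul, Complex.norm_real, Real.norm_eq_abs, _root_.abs_of_nonneg (hφ0 U y)]
      rw [this]
      exact mul_le_mul_of_nonneg_left (Cc.norm_le_iSup hf _) (hφ0 U y)
    refine h2.trans ?_
    rw [integral_mul_const, hφint U, one_mul]
  have hsup_nonneg : ∀ f : G → ℂ, (0:ℝ) ≤ ⨆ y, ‖f y‖ :=
    fun f => Real.iSup_nonneg fun y => norm_nonneg _
  have hconv_sup_le : ∀ (U : ι) (f : G → ℂ), f ∈ Cc G →
      (⨆ x, ‖conv θ (φc U) f x‖) ≤ ⨆ y, ‖f y‖ :=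
    fun U f hf => Real.iSup_le (hconv_le U f hf) (hsup_nonneg f)
  -- support of conv with bump
  have hconv_supp : ∀ (U : ι) (f : G → ℂ) (K : Set G), tsupport f ⊆ K →
      tsupport (conv θ (φc U) f) ⊆ closure (V + K) := by
    intro U f K hK
    refine closure_mono ?_
    refine (support_convolution_subset (ContinuousLinearMap.mul ℂ ℂ)
      (f := φc U) (g := f) (μ := θ)).trans ?_
    exact Set.add_subset_add (hφcV U) ((subset_tsupport f).trans hK)
  -- the filter and ultrafilter
  set F : Filter ι := Filter.comap Subtype.val (𝓝 (0:G)).smallSets with hF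
  have hbasis : F.HasBasis (fun s => s ∈ 𝓝 (0:G)) (fun s => {U : ι | U.1 ⊆ s}) :=
    (Filter.hasBasis_smallSets (𝓝 (0:G))).comap (Subtype.val : ι → Set G)
  have hne : F.NeBot := hbasis.neBot_iff.2 (fun {s} hs => ⟨⟨s, hs⟩, by simp⟩)
  let 𝒰 : Ultrafilter ι := @Ultrafilter.of ι F hne
  have h𝒰F : (𝒰 : Filter ι) ≤ F := Ultrafilter.of_le F
  have hev : ∀ W ∈ 𝓝 (0:G), ∀ᶠ U : ι in 𝒰, U.1 ⊆ W := fun W hW =>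
    h𝒰F (hbasis.mem_of_mem hW)
  -- key uniform bound
  have key : ∀ (f : G → ℂ), f ∈ Cc G → ∀ K : Set G, IsCompact K → tsupport f ⊆ K →
      ∃ C : ℝ, 0 < C ∧ ∀ (U : ι) (t : G),
        ‖smApply θ ϑ (fun x => conv θ (φc U) f (x - t))‖ ≤ C * ⨆ x, ‖f x‖ := by
    intro f hf K hK hsupp
    obtain ⟨C, hC0, hC⟩ := hbd (closure (V + K)) ((hVc.add hK).closure)
    refine ⟨C, hC0, fun U t => ?_⟩
    have h1 := hC (conv θ (φc U) f) (hconvK2 U f hf) (hconv_supp U f K hsupp) t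
    refine h1.trans (mul_le_mul_of_nonneg_left (hconv_sup_le U f hf) hC0.le)
  -- existence of limits along the ultrafilter
  have hex : ∀ f : G → ℂ, f ∈ Cc G →
      ∃ z, Tendsto (fun U : ι => smApply θ ϑ (conv θ (φc U) f)) 𝒰 (𝓝 z) := by
    intro f hf
    obtain ⟨C, hC0, hC⟩ := key f hf (tsupport f) hf.2 subset_rfl
    have hbd' : ∀ U : ι, ‖smApply θ ϑ (conv θ (φc U) f)‖ ≤ C * ⨆ x, ‖f x‖ := by
      intro U
      have := hC U 0
      simpa only [sub_zero] using this
    obtain ⟨z, -, hz⟩ := (isCompact_closedBall (0:ℂ) (C * ⨆ x, ‖f x‖)).ultrafilter_le_nhds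
      (𝒰.map (fun U : ι => smApply θ ϑ (conv θ (φc U) f)))
      (by
        rw [Ultrafilter.coe_map, le_principal_iff, mem_map]
        exact Filter.univ_mem' (fun U => by
          simpa [Metric.mem_closedBall, dist_eq_norm] using hbd' U))
    exact ⟨z, hz⟩
  -- the limit functional
  set Lfun : CcSub G → ℂ :=
    (fun f => limUnder 𝒰 (fun U : ι => smApply θ ϑ (conv θ (φc U) f.1))) with hLfun
  have hLf : ∀ f : CcSub G,
      Tendsto (fun U : ι => smApply θ ϑ (conv θ (φc U) f.1)) 𝒰 (𝓝 (Lfun f)) :=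
    fun f => tendsto_nhds_limUnder (hex f.1 f.2)
  -- linearity
  have hadd : ∀ f g : CcSub G, Lfun (f + g) = Lfun f + Lfun g := by
    intro f g
    have hc : ∀ U : ι, conv θ (φc U) ((f + g) : CcSub G).1
        = conv θ (φc U) f.1 + conv θ (φc U) g.1 := by
      intro U
      funext x
      show ∫ y, φc U y * (f.1 (x - y) + g.1 (x - y)) ∂θ
          = (∫ y, φc U y * f.1 (x - y) ∂θ) + ∫ y, φc U y * g.1 (x - y) ∂θ
      rw [← integral_add (hker U f.1 f.2.1 x) (hker U g.1 g.2.1 x)]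
      congr 1; funext y; ring
    have he : (fun U : ι => smApply θ ϑ (conv θ (φc U) ((f + g) : CcSub G).1))
        = fun U : ι => smApply θ ϑ (conv θ (φc U) f.1) + smApply θ ϑ (conv θ (φc U) g.1) := by
      funext U
      rw [hc U, smApply_add θ ϑ (hconvK2 U f.1 f.2) (hconvK2 U g.1 g.2)]
    have h2 : Tendsto (fun U : ι => smApply θ ϑ (conv θ (φc U) ((f + g) : CcSub G).1)) 𝒰
        (𝓝 (Lfun f + Lfun g)) := by
      rw [he]; exact (hLf f).add (hLf g)
    exact tendsto_nhds_unique (hLf (f + g)) h2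
  have hsmul : ∀ (c : ℂ) (f : CcSub G), Lfun (c • f) = c • Lfun f := by
    intro c f
    have hc : ∀ U : ι, conv θ (φc U) ((c • f : CcSub G)).1 = c • conv θ (φc U) f.1 := by
      intro U
      funext x
      show ∫ y, φc U y * (c • f.1 (x - y)) ∂θ = c • ∫ y, φc U y * f.1 (x - y) ∂θ
      rw [← integral_smul]
      congr 1; funext y; simp [smul_eq_mul]; ring
    have he : (fun U : ι => smApply θ ϑ (conv θ (φc U) ((c • f : CcSub G)).1))
        = fun U : ι => c • smApply θ ϑ (conv θ (φc U) f.1) := by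
      funext U
      rw [hc U, smApply_smul θ ϑ c (hconvK2 U f.1 f.2)]
    have h2 : Tendsto (fun U : ι => smApply θ ϑ (conv θ (φc U) ((c • f : CcSub G)).1)) 𝒰
        (𝓝 (c • Lfun f)) := by
      rw [he]; exact (hLf f).const_smul c
    exact tendsto_nhds_unique (hLf (c • f)) h2
  set L : CcSub G →ₗ[ℂ] ℂ :=
    { toFun := Lfun, map_add' := hadd, map_smul' := hsmul } with hL
  have hcc : ∀ (f : G → ℂ) (h : f ∈ CcSub G), ccApply L f = Lfun ⟨f, h⟩ := by
    intro f h
    simp only [ccApply]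
    rw [dif_pos h]
    rfl
  -- translation boundedness (also gives continuity at t = 0)
  have htb : ∀ K : Set G, IsCompact K → ∃ C : ℝ, 0 < C ∧ ∀ f ∈ CcSub G,
      tsupport f ⊆ K → ∀ t : G, ‖ccApply L (fun x => f (x - t))‖ ≤ C * ⨆ x, ‖f x‖ := by
    intro K hK
    obtain ⟨C, hC0, hC⟩ := hbd (closure (V + K)) ((hVc.add hK).closure)
    refine ⟨C, hC0, fun f hf hsupp t => ?_⟩
    have hfc : f ∈ Cc G := hf
    have hgc : (fun x => f (x - t)) ∈ Cc G := by
      refine ⟨hfc.1.comp (continuous_id.sub continuous_const), ?_⟩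
      exact hfc.2.comp_homeomorph (Homeomorph.subRight t)
    rw [hcc _ hgc]
    have htrans : ∀ U : ι, conv θ (φc U) (fun x => f (x - t))
        = fun x => conv θ (φc U) f (x - t) := by
      intro U
      funext x
      show ∫ y, φc U y * f (x - y - t) ∂θ = ∫ y, φc U y * f (x - t - y) ∂θ
      congr 1; funext y; rw [sub_right_comm]
    have hbnd : ∀ U : ι, ‖smApply θ ϑ (conv θ (φc U) (fun x => f (x - t)))‖
        ≤ C * ⨆ x, ‖f x‖ := by
      intro U
      rw [htrans U]
      have h1 := hC (conv θ (φc U) f) (hconvK2 U f hfc) (hconv_supp U f K hsupp) t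
      exact h1.trans (mul_le_mul_of_nonneg_left (hconv_sup_le U f hfc) hC0.le)
    exact le_of_tendsto ((hLf ⟨_, hgc⟩).norm) (Filter.Eventually.of_forall hbnd)
  refine ⟨L, ?_, htb, ?_⟩
  · -- continuity
    intro K hK
    obtain ⟨C, hC0, hC⟩ := htb K hK
    refine ⟨C, hC0, fun f hf hsupp => ?_⟩
    have := hC f hf hsupp 0
    simpa only [sub_zero] using this
  · -- extension of ϑ
    intro f hf
    have hfc : f ∈ Cc G := hK2Cc f hf
    rw [hcc f hfc]
    refine Filter.Tendsto.limUnder_eq ?_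
    -- show convergence to smApply θ ϑ f
    have hufc : UniformContinuous f :=
      Continuous.uniformContinuous_of_tendsto_cocompact hfc.1 hfc.2.is_zero_at_infty
    obtain ⟨C, hC0, hC⟩ := hbd (closure (V + tsupport f)) ((hVc.add hfc.2.isCompact).closure)
    rw [Metric.tendsto_nhds]
    intro ε hε
    set ε' : ℝ := ε / (2 * C) with hε'
    have hε'0 : 0 < ε' := by positivity
    -- uniform continuity gives a W
    have hS : {p : G × G | dist (f p.1) (f p.2) < ε'} ∈ 𝓤 G :=
      hufc (Metric.dist_mem_uniformity hε'0)
    rw [uniformity_eq_comap_nhds_zero G, Filter.mem_comap] at hS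
    obtain ⟨W, hW, hWS⟩ := hS
    filter_upwards [hev W hW] with U hUW
    -- the difference function
    set d : G → ℂ := conv θ (φc U) f - f with hd
    have hdK2 : d ∈ K2 θ := sub_mem (hconvK2 U f hfc) hf
    have hdsupp : tsupport d ⊆ closure (V + tsupport f) := by
      refine closure_mono ?_
      intro x hx
      have hx' : x ∈ Function.support (conv θ (φc U) f) ∪ Function.support f :=
        Function.support_sub (conv θ (φc U) f) f hx
      rcases hx' with hx' | hx'
      · exact (support_convolution_subset (ContinuousLinearMap.mul ℂ ℂ)
          (f := φc U) (g := f) (μ := θ)).trans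
          (Set.add_subset_add (hφcV U) (subset_tsupport f)) hx'
      · exact ⟨0, h0V, x, subset_tsupport f hx', zero_add x⟩
    -- pointwise bound on d
    have hdle : ∀ x : G, ‖d x‖ ≤ ε' := by
      intro x
      have h1 : d x = ∫ y, φc U y * (f (x - y) - f x) ∂θ := by
        have e1 : (∫ y, φc U y * f x ∂θ) = f x := by
          rw [integral_mul_const (μ := θ) (f := fun y => φc U y), hφcint U, one_mul]
        have e2 : d x = (∫ y, φc U y * f (x - y) ∂θ) - ∫ y, φc U y * f x ∂θ := by
          rw [e1]; rfl
        rw [e2, ← integral_sub (hker U f hfc.1 x)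
          ((((hφcc U).integrable_of_hasCompactSupport (hφccs U))).mul_const (f x))]
        congr 1; funext y; ring
      rw [h1]
      have h2 : ‖∫ y, φc U y * (f (x - y) - f x) ∂θ‖
          ≤ ∫ y, φ U y * ε' ∂θ := by
        refine (norm_integral_le_integral_norm _).trans ?_
        refine integral_mono ?_ (((hφc U).integrable_of_hasCompactSupport (hφs U)).mul_const _)
          (fun y => ?_)
        · refine (Integrable.norm ?_)
          exact (hker U f hfc.1 x).sub
            (((hφcc U).integrable_of_hasCompactSupport (hφccs U)).mul_const (f x)) |>.congr
            (by
              refine Filter.Eventually.of_forall (fun y => ?_)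
              simp only [Pi.sub_apply]
              ring)
        · by_cases hy : φ U y = 0
          · simp [φc, hy]
          · have hyW : y ∈ W := hUW (hφcU U (by rw [hφ896]; exact hy))
            have hdist : dist (f (x - y)) (f x) < ε' := by
              have hmem : ((x - y, x) : G × G) ∈ (fun p : G × G => p.2 - p.1) ⁻¹' W := by
                show x - (x - y) ∈ W
                rwa [sub_sub_cancel]
              exact hWS hmem
            have : ‖φc U y * (f (x - y) - f x)‖ = φ U y * ‖f (x - y) - f x‖ := by
              rw [norm_mul, Complex.norm_real, Real.norm_eq_abs, _root_.abs_of_nonneg (hφ0 U y)]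
            rw [this, ← dist_eq_norm]
            exact mul_le_mul_of_nonneg_left hdist.le (hφ0 U y)
      refine h2.trans ?_
      rw [integral_mul_const, hφint U, one_mul]
    -- conclude
    have h3 : ‖smApply θ ϑ (conv θ (φc U) f) - smApply θ ϑ f‖ ≤ C * ε' := by
      rw [← smApply_sub θ ϑ (hconvK2 U f hfc) hf]
      have h4 := hC d hdK2 hdsupp 0
      have h5 : (fun x => d (x - 0)) = d := by funext x; rw [sub_zero]
      rw [h5] at h4
      refine h4.trans ?_
      exact mul_le_mul_of_nonneg_left (Real.iSup_le hdle hε'0.le) hC0.le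
    rw [dist_eq_norm]
    calc ‖smApply θ ϑ (conv θ (φc U) f) - smApply θ ϑ f‖ ≤ C * ε' := h3
      _ = ε / 2 := by rw [hε', mul_div_assoc', mul_comm 2 C, mul_div_mul_left _ _ hC0.ne']
      _ < ε := by linarith
end
end
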